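/- The assumption of reflexivity does not affect the logic E: a formula of the language of E is valid in the class of all preference models if and only if it is valid in the class of preference models whose betterness relation ≽ is reflexive. -/

import Mathlib

/-- Formulas of Åqvist's dyadic deontic logic **E**:
`φ ::= p | ¬φ | φ∧φ | □φ | ○(φ/φ)`.
`EForm.ob ψ φ` denotes `○(ψ/φ)` ("ψ is obligatory, given φ"). -/
inductive EForm : Type where
  | atom : ℕ → EForm
  | neg  : EForm → EForm
  | conj : EForm → EForm → EForm
  | box  : EForm → EForm
  | ob   : EForm → EForm → EForm
deriving DecidableEq

/-- Material implication, defined classically. -/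
def EForm.impl (φ ψ : EForm) : EForm := .neg (.conj φ (.neg ψ))

/-- Biconditional. -/
def EForm.iff' (φ ψ : EForm) : EForm := .conj (φ.impl ψ) (ψ.impl φ)

/-- A preference model `M = (W, ≽, V)`: a nonempty set of worlds, a betterness
relation, and a valuation. -/
structure PrefModel where
  W : Type
  ne : Nonempty W
  R : W → W → Prop
  V : ℕ → W → Prop

/-- Satisfaction `M,s ⊨ φ`. In particular
`M,s ⊨ ○(ψ/φ)` iff `opt_≽(‖φ‖) ⊆ ‖ψ‖`, where
`opt_≽(‖φ‖) = {w ∈ ‖φ‖ : ∀ y, (M,y ⊨ φ) → w ≽ y}`. -/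
def PrefModel.sat (M : PrefModel) : M.W → EForm → Prop
  | s, .atom n   => M.V n s
  | s, .neg φ    => ¬ PrefModel.sat M s φ
  | s, .conj φ ψ => PrefModel.sat M s φ ∧ PrefModel.sat M s ψ
  | _, .box φ    => ∀ t, PrefModel.sat M t φ
  | _, .ob ψ φ   => ∀ w, (PrefModel.sat M w φ ∧ ∀ y, PrefModel.sat M y φ → M.R w y) →
                     PrefModel.sat M w ψ

/-- Validity in the class of all preference models. -/
def EValid (φ : EForm) : Prop := ∀ (M : PrefModel) (s : M.W), M.sat s φ

/-!
Every preference model is modally equivalent to a reflexive one: take two copies of each world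
and add the identity to the lifted betterness relation. A world is optimal among the
`φ`-worlds of the doubled model exactly when its original is optimal in `M`, since it must
also beat the other copy of each `φ`-world, and that copy is a different world.
-/

namespace PrefModel

def doubled (M : PrefModel) : PrefModel where
  W := M.W × Bool
  ne := ⟨(M.ne.some, true)⟩
  R a b := M.R a.1 b.1 ∨ a = b
  V n a := M.V n a.1

variable (M : PrefModel)

theorem doubled_refl (a : M.doubled.W) : M.doubled.R a a := Or.inr rfl

theorem doubled_isBest_iff (P : M.W → Prop) (a : M.doubled.W) :
    (∀ b : M.doubled.W, P b.1 → M.doubled.R a b) ↔ ∀ y, P y → M.R a.1 y := by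
  constructor
  · intro h y hy
    rcases h (y, !a.2) hy with hR | heq
    · exact hR
    · exact absurd (congrArg Prod.snd heq) (by cases a.2 <;> simp)
  · exact fun h b hb => Or.inl (h b.1 hb)

theorem doubled_sat_iff (φ : EForm) (a : M.doubled.W) : M.doubled.sat a φ ↔ M.sat a.1 φ := by
  induction φ generalizing a with
  | atom n => rfl
  | neg φ ih => exact not_congr (ih a)
  | conj φ ψ ihφ ihψ => exact and_congr (ihφ a) (ihψ a)
  | box φ ih =>
    simp only [sat, ih]
    exact ⟨fun h t => h (t, true), fun h t => h t.1⟩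
  | ob ψ φ ihψ ihφ =>
    simp only [sat, ihψ, ihφ]
    constructor
    · intro h w ⟨hφ, hbest⟩
      exact h (w, true) ⟨hφ, (M.doubled_isBest_iff _ (w, true)).2 hbest⟩
    · intro h w ⟨hφ, hbest⟩
      exact h w.1 ⟨hφ, (M.doubled_isBest_iff _ w).1 hbest⟩

end PrefModel

/-- **Reflexivity does not affect the logic E**: a formula is valid in the
class of all preference models iff it is valid in the class of preference
models whose betterness relation is reflexive. -/
theorem E_reflexive_idle :
    ∀ φ : EForm,
      EValid φ ↔ (∀ M : PrefModel, (∀ w : M.W, M.R w w) → ∀ s : M.W, M.sat s φ) := by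
  intro φ
  refine ⟨fun h M _ s => h M s, fun h M s => ?_⟩
  exact (M.doubled_sat_iff φ (s, true)).1 (h M.doubled M.doubled_refl (s, true))
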